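/- arXiv:0904.0543 — 6 statements merged into one kernel-verified Lean document; each statement's English description precedes it below -/
import Mathlib

section
/- Let ρ: ℝ → ℝ be strictly convex. For a finite family of real observations (Y_i)_{i ∈ S} indexed by a finite set S, define m(S) as a minimizer over μ ∈ ℝ of ∑_{i ∈ S} ρ(Y_i − μ). If S is partitioned into pairwise disjoint nonempty sets S_1, …, S_J, then min_j m(S_j) ≤ m(S) ≤ max_j m(S_j). -/
/-!
Write `F_T μ = ∑_{i ∈ T} ρ (Y i - μ)`, so that `F_S = ∑_j F_{P j}`. If `m S < c := min_j m (P j)`,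
then `c` lies between `m S` and every `m (P j)`; convexity of `F_{P j}` together with minimality of
`m (P j)` gives `F_{P j} c ≤ F_{P j} (m S)`. Summing, `c` is another minimizer of the strictly
convex `F_S`, contradicting uniqueness. The upper bound is symmetric.
-/

open Finset Set

theorem StrictConvexOn.finset_sum {𝕜 E β ι : Type*} [Semiring 𝕜] [PartialOrder 𝕜]
    [AddCommMonoid E] [SMul 𝕜 E] [AddCommMonoid β] [PartialOrder β] [IsOrderedCancelAddMonoid β]
    [DistribMulAction 𝕜 β] {s : Set E} {t : Finset ι} (ht : t.Nonempty) {f : ι → E → β}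
    (hf : ∀ i ∈ t, StrictConvexOn 𝕜 s (f i)) : StrictConvexOn 𝕜 s fun x => ∑ i ∈ t, f i x := by
  induction ht using Finset.Nonempty.cons_induction with
  | singleton i => simpa using hf i (mem_singleton_self i)
  | cons i t _ _ ih =>
    simp_rw [sum_cons]
    exact (hf i (mem_cons_self i t)).add (ih fun j hj => hf j (mem_cons_of_mem hj))

theorem StrictConvexOn.comp_const_sub {𝕜 E β : Type*} [CommRing 𝕜] [PartialOrder 𝕜]
    [AddCommGroup E] [Module 𝕜 E] [AddCommMonoid β] [PartialOrder β] [SMul 𝕜 β] {f : E → β}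
    (hf : StrictConvexOn 𝕜 univ f) (c : E) : StrictConvexOn 𝕜 univ fun x => f (c - x) := by
  refine ⟨convex_univ, fun x _ y _ hxy a b ha hb hab => ?_⟩
  have hsub : c - (a • x + b • y) = a • (c - x) + b • (c - y) := by
    linear_combination (norm := module) -hab • c
  dsimp only
  rw [hsub]
  exact hf.2 trivial trivial (sub_right_injective.ne hxy) ha hb hab

theorem StrictConvexOn.eq_of_isMinOn_sum_of_mem_segment {𝕜 E ι : Type*} [Field 𝕜] [LinearOrder 𝕜]
    [IsStrictOrderedRing 𝕜] [AddCommGroup E] [Module 𝕜 E]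
    {t : Finset ι} {f : ι → E → 𝕜} {a : ι → E} {b c : E}
    (hF : StrictConvexOn 𝕜 univ fun x => ∑ j ∈ t, f j x)
    (hb : IsMinOn (fun x => ∑ j ∈ t, f j x) univ b)
    (hf : ∀ j ∈ t, ConvexOn 𝕜 univ (f j)) (ha : ∀ j ∈ t, IsMinOn (f j) univ (a j))
    (hc : ∀ j ∈ t, c ∈ segment 𝕜 b (a j)) : c = b := by
  have hcb : ∑ j ∈ t, f j c ≤ ∑ j ∈ t, f j b := sum_le_sum fun j hj =>
    ((hf j hj).le_on_segment trivial trivial (hc j hj)).trans (max_le le_rfl (ha j hj trivial))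
  exact hF.eq_of_isMinOn (fun x _ => hcb.trans (hb trivial)) hb trivial trivial

section Line

variable {𝕜 ι : Type*} [Field 𝕜] [LinearOrder 𝕜] [IsStrictOrderedRing 𝕜]
  {t : Finset ι} {f : ι → 𝕜 → 𝕜} {a : ι → 𝕜} {b : 𝕜}

theorem StrictConvexOn.inf'_le_of_isMinOn_sum (ht : t.Nonempty)
    (hF : StrictConvexOn 𝕜 univ fun x => ∑ j ∈ t, f j x)
    (hb : IsMinOn (fun x => ∑ j ∈ t, f j x) univ b)
    (hf : ∀ j ∈ t, ConvexOn 𝕜 univ (f j)) (ha : ∀ j ∈ t, IsMinOn (f j) univ (a j)) :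
    t.inf' ht a ≤ b := by
  by_contra! hlt
  refine hlt.ne' (hF.eq_of_isMinOn_sum_of_mem_segment hb hf ha fun j hj => ?_)
  rw [segment_eq_Icc (hlt.le.trans (inf'_le a hj))]
  exact ⟨hlt.le, inf'_le a hj⟩

theorem StrictConvexOn.le_sup'_of_isMinOn_sum (ht : t.Nonempty)
    (hF : StrictConvexOn 𝕜 univ fun x => ∑ j ∈ t, f j x)
    (hb : IsMinOn (fun x => ∑ j ∈ t, f j x) univ b)
    (hf : ∀ j ∈ t, ConvexOn 𝕜 univ (f j)) (ha : ∀ j ∈ t, IsMinOn (f j) univ (a j)) :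
    b ≤ t.sup' ht a := by
  by_contra! hlt
  refine hlt.ne (hF.eq_of_isMinOn_sum_of_mem_segment hb hf ha fun j hj => ?_)
  rw [segment_symm, segment_eq_Icc ((le_sup' a hj).trans hlt.le)]
  exact ⟨le_sup' a hj, hlt.le⟩

end Line

/-- Partition property of M-estimators for strictly convex `ρ`:
the minimizer of `μ ↦ ∑_{i ∈ S} ρ(Y i − μ)` over a partitioned set `S`
lies between the minimal and maximal minimizers over the pieces. -/
theorem strictConvex_location_estimator_partition_property
    {ι : Type*} [DecidableEq ι] (ρ : ℝ → ℝ) (hρ : StrictConvexOn ℝ Set.univ ρ)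
    (Y : ι → ℝ) (m : Finset ι → ℝ)
    (hm : ∀ T : Finset ι, T.Nonempty →
      ∀ μ : ℝ, ∑ i ∈ T, ρ (Y i - m T) ≤ ∑ i ∈ T, ρ (Y i - μ))
    (S : Finset ι) (J : ℕ) (P : Fin (J + 1) → Finset ι)
    (hne : ∀ j, (P j).Nonempty)
    (hdis : ∀ j j', j ≠ j' → Disjoint (P j) (P j'))
    (hun : S = Finset.univ.biUnion P) :
    Finset.univ.inf' Finset.univ_nonempty (fun j => m (P j)) ≤ m S ∧
      m S ≤ Finset.univ.sup' Finset.univ_nonempty (fun j => m (P j)) := by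
  have hF (T : Finset ι) (hT : T.Nonempty) :
      StrictConvexOn ℝ univ fun μ => ∑ i ∈ T, ρ (Y i - μ) :=
    .finset_sum hT fun i _ => hρ.comp_const_sub (Y i)
  have hmin (T : Finset ι) (hT : T.Nonempty) :
      IsMinOn (fun μ => ∑ i ∈ T, ρ (Y i - μ)) univ (m T) :=
    fun μ _ => hm T hT μ
  have hS : S.Nonempty := hun ▸ univ_nonempty.biUnion fun j _ => hne j
  have hsplit : (fun μ => ∑ i ∈ S, ρ (Y i - μ)) = fun μ => ∑ j, ∑ i ∈ P j, ρ (Y i - μ) := by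
    subst hun
    funext μ
    exact sum_biUnion fun j _ j' _ h => hdis j j' h
  have hFS := hsplit ▸ hF S hS
  have hminS := hsplit ▸ hmin S hS
  have hFP (j) (_ : j ∈ (univ : Finset (Fin (J + 1)))) := (hF (P j) (hne j)).convexOn
  have hminP (j) (_ : j ∈ (univ : Finset (Fin (J + 1)))) := hmin (P j) (hne j)
  exact ⟨hFS.inf'_le_of_isMinOn_sum _ hminS hFP hminP,
    hFS.le_sup'_of_isMinOn_sum _ hminS hFP hminP⟩
end

section
/- Let ρ: ℝ → ℝ be strictly convex and let m(T) denote the unique minimizer of μ ↦ ∑_{i∈T} ρ(Y_i − μ) for a nonempty finite index set T. If S = ⋃_j S_j is a partition into nonempty sets and m(S) < m(S_j) for all j, then ∑_{i∈S} ρ'₋(Y_i − m(S)) > 0, contradicting the first-order optimality condition ∑_{i∈S} ρ'₋(Y_i − m(S)) ≤ 0; i.e., the assumption m(S) < min_j m(S_j) is impossible. -/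
open Set Filter Topology

lemma rightDeriv_le_slope {ρ : ℝ → ℝ} (hρ : ConvexOn ℝ Set.univ ρ) {d b c : ℝ}
    (hd : HasDerivWithinAt ρ d (Set.Ioi b) b) (hbc : b < c) :
    d ≤ (ρ c - ρ b) / (c - b) := by
  have ht : Tendsto (slope ρ b) (𝓝[>] b) (𝓝 d) :=
    (hasDerivWithinAt_iff_tendsto_slope' (by simp)).1 hd
  refine le_of_tendsto ht ?_
  filter_upwards [Ioo_mem_nhdsGT_of_mem ⟨le_refl b, hbc⟩] with x hx
  rw [slope_def_field]
  exact hρ.secant_mono (Set.mem_univ b) (Set.mem_univ x) (Set.mem_univ c)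
    (ne_of_gt hx.1) (ne_of_gt (hbc)) hx.2.le

lemma slope_le_leftDeriv {ρ : ℝ → ℝ} (hρ : ConvexOn ℝ Set.univ ρ) {d c a : ℝ}
    (hd : HasDerivWithinAt ρ d (Set.Iio a) a) (hca : c < a) :
    (ρ a - ρ c) / (a - c) ≤ d := by
  have ht : Tendsto (slope ρ a) (𝓝[<] a) (𝓝 d) :=
    (hasDerivWithinAt_iff_tendsto_slope' (by simp)).1 hd
  refine ge_of_tendsto ht ?_
  filter_upwards [Ioo_mem_nhdsLT_of_mem ⟨hca, le_refl a⟩] with x hx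
  rw [slope_def_field]
  have h := hρ.secant_mono (Set.mem_univ a) (Set.mem_univ c) (Set.mem_univ x)
    (ne_of_lt hca) (ne_of_lt hx.2) hx.1.le
  calc (ρ a - ρ c) / (a - c) = (ρ c - ρ a) / (c - a) := by rw [← neg_div_neg_eq]; ring_nf
    _ ≤ (ρ x - ρ a) / (x - a) := h

lemma rightDeriv_lt_leftDeriv {ρ : ℝ → ℝ} (hρ : StrictConvexOn ℝ Set.univ ρ)
    {dpb dma b a : ℝ} (hdp : HasDerivWithinAt ρ dpb (Set.Ioi b) b)
    (hdm : HasDerivWithinAt ρ dma (Set.Iio a) a) (hba : b < a) :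
    dpb < dma := by
  set c := (a + b) / 2 with hc
  have hbc : b < c := by simp [hc]; linarith
  have hca : c < a := by simp [hc]; linarith
  have h1 : dpb ≤ (ρ c - ρ b) / (c - b) := rightDeriv_le_slope hρ.convexOn hdp hbc
  have h2 : (ρ c - ρ b) / (c - b) < (ρ a - ρ c) / (a - c) :=
    hρ.slope_strict_mono_adjacent (Set.mem_univ b) (Set.mem_univ a) hbc hca
  have h3 : (ρ a - ρ c) / (a - c) ≤ dma := slope_le_leftDeriv hρ.convexOn hdm hca
  linarith

/-- If `m S < m (S_j)` for every piece of a partition of `S`, then the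
left-derivative first-order condition is violated: the sum of left derivatives
at `m S` is strictly positive, contradicting `∑ ρ'₋(Y_i − m S) ≤ 0`.
Hence `m S < min_j m (S_j)` is impossible. -/
theorem location_estimator_not_below_all_pieces
    {ι : Type*} [DecidableEq ι] (ρ : ℝ → ℝ) (hρ : StrictConvexOn ℝ Set.univ ρ)
    (Y : ι → ℝ) (m : Finset ι → ℝ) (dp dm : ℝ → ℝ)
    (hdp : ∀ x : ℝ, HasDerivWithinAt ρ (dp x) (Set.Ioi x) x)
    (hdm : ∀ x : ℝ, HasDerivWithinAt ρ (dm x) (Set.Iio x) x)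
    (hm : ∀ T : Finset ι, T.Nonempty →
      ∀ μ : ℝ, ∑ i ∈ T, ρ (Y i - m T) ≤ ∑ i ∈ T, ρ (Y i - μ))
    (hfoc : ∀ T : Finset ι, T.Nonempty →
      ∑ i ∈ T, dm (Y i - m T) ≤ 0 ∧ 0 ≤ ∑ i ∈ T, dp (Y i - m T))
    (S : Finset ι) (J : ℕ) (P : Fin (J + 1) → Finset ι)
    (hne : ∀ j, (P j).Nonempty)
    (hdis : ∀ j j', j ≠ j' → Disjoint (P j) (P j'))
    (hun : S = Finset.univ.biUnion P) :
    ((∀ j, m S < m (P j)) → 0 < ∑ i ∈ S, dm (Y i - m S)) ∧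
      ¬ (∀ j, m S < m (P j)) := by
  have key : (∀ j, m S < m (P j)) → 0 < ∑ i ∈ S, dm (Y i - m S) := by
    intro H
    have hssum : ∑ i ∈ S, dm (Y i - m S) = ∑ j, ∑ i ∈ P j, dm (Y i - m S) := by
      rw [hun]
      exact Finset.sum_biUnion (fun j _ j' _ hjj' => hdis j j' hjj')
    rw [hssum]
    refine Finset.sum_pos (fun j _ => ?_) Finset.univ_nonempty
    have hpos : 0 ≤ ∑ i ∈ P j, dp (Y i - m (P j)) := (hfoc (P j) (hne j)).2
    have hlt : ∑ i ∈ P j, dp (Y i - m (P j)) < ∑ i ∈ P j, dm (Y i - m S) := by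
      refine Finset.sum_lt_sum_of_nonempty (hne j) (fun i _ => ?_)
      exact rightDeriv_lt_leftDeriv hρ (hdp _) (hdm _) (by linarith [H j])
    linarith
  refine ⟨key, fun H => ?_⟩
  have hSne : S.Nonempty := by
    obtain ⟨i, hi⟩ := hne 0
    exact ⟨i, by rw [hun]; exact Finset.mem_biUnion.2 ⟨0, Finset.mem_univ _, hi⟩⟩
  have := (hfoc S hSne).1
  linarith [key H]
end

section
/- The sample median satisfies the partition property: for any finite multiset of reals S partitioned into nonempty multisets S_1, …, S_J, min_j median(S_j) ≤ median(S) ≤ max_j median(S_j), where for even cardinality N the median is defined as the average of the N/2-th and (1+N/2)-th order statistics. -/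
open scoped BigOperators

/-- The sample median of a finite multiset of reals: the middle order statistic
for odd cardinality, and the average of the two middle order statistics
(the `N/2`-th and `(1+N/2)`-th, 1-indexed) for even cardinality `N`. -/
noncomputable def sampleMedian (s : Multiset ℝ) : ℝ :=
  let l := s.sort (· ≤ ·)
  if l.length % 2 = 1 then l.getD (l.length / 2) 0
  else (l.getD (l.length / 2 - 1) 0 + l.getD (l.length / 2) 0) / 2

/-!
Write the median as the midpoint `(L + U) / 2` of the lower and upper medians. Then
`(L + U) / 2 ≤ t` iff for every split `a + b = 2 t` we have `L ≤ a` or `U ≤ b`, and each of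
these is a counting condition: `L ≤ a` iff at least half of the elements are `≤ a`, and `U ≤ b`
iff more than half of them are `≤ b`. For a fixed split these disjunctions add up over the parts
of a partition, because the counts are monotone in the threshold; the lower bound is the same
argument with strict thresholds.
-/

theorem List.Pairwise.getElem_mem_iff_lt_countP {α : Type*} [Preorder α] {l : List α}
    (hl : l.Pairwise (· ≤ ·)) {p : α → Prop} [DecidablePred p]
    (hp : ∀ x y, x ≤ y → p y → p x) {i : ℕ} (hi : i < l.length) :
    p l[i] ↔ i < l.countP (p ·) := by
  induction l generalizing i with
  | nil => simp at hi
  | cons a l ih =>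
    obtain ⟨ha, hl⟩ := List.pairwise_cons.mp hl
    rw [List.countP_cons]
    by_cases hpa : p a
    · cases i with
      | zero => simp [hpa]
      | succ i => simpa [hpa] using ih hl (by simpa using hi)
    · have hnone : l.countP (p ·) = 0 :=
        List.countP_eq_zero.mpr fun x hx hpx => hpa (hp a x (ha x hx) (by simpa using hpx))
      cases i with
      | zero => simp [hpa, hnone]
      | succ i => simpa [hpa, hnone] using fun h => hpa (hp _ _ (ha _ (List.getElem_mem _)) h)

theorem Multiset.countP_mono_left {α : Type*} {p q : α → Prop} [DecidablePred p]
    [DecidablePred q] {s : Multiset α} (h : ∀ x ∈ s, p x → q x) :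
    s.countP p ≤ s.countP q := by
  induction s using Quot.inductionOn with
  | h l => simpa using List.countP_mono_left (by simpa using h)

noncomputable def lowerMedian (s : Multiset ℝ) : ℝ :=
  (s.sort (· ≤ ·)).getD ((Multiset.card s - 1) / 2) 0

noncomputable def upperMedian (s : Multiset ℝ) : ℝ :=
  (s.sort (· ≤ ·)).getD (Multiset.card s / 2) 0

theorem sampleMedian_eq_lowerMedian_add_upperMedian (s : Multiset ℝ) :
    sampleMedian s = (lowerMedian s + upperMedian s) / 2 := by
  simp only [sampleMedian, lowerMedian, upperMedian, Multiset.length_sort]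
  split_ifs with h
  · rw [show (Multiset.card s - 1) / 2 = Multiset.card s / 2 by omega]; ring
  · rw [show (Multiset.card s - 1) / 2 = Multiset.card s / 2 - 1 by omega]

theorem sort_getD_mem_iff_lt_countP {s : Multiset ℝ} {p : ℝ → Prop} [DecidablePred p]
    (hp : ∀ x y, x ≤ y → p y → p x) {i : ℕ} (hi : i < Multiset.card s) :
    p ((s.sort (· ≤ ·)).getD i 0) ↔ i < s.countP p := by
  rw [← Multiset.length_sort (· ≤ ·)] at hi
  rw [List.getD_eq_getElem _ _ hi, (Multiset.pairwise_sort s _).getElem_mem_iff_lt_countP hp hi,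
    ← Multiset.coe_countP, Multiset.sort_eq]

theorem lowerMedian_mem_iff {s : Multiset ℝ} (hs : s ≠ 0) {p : ℝ → Prop} [DecidablePred p]
    (hp : ∀ x y, x ≤ y → p y → p x) : p (lowerMedian s) ↔ Multiset.card s ≤ 2 * s.countP p := by
  have := Multiset.card_pos.mpr hs
  rw [lowerMedian, sort_getD_mem_iff_lt_countP hp (by omega)]
  omega

theorem upperMedian_mem_iff {s : Multiset ℝ} (hs : s ≠ 0) {p : ℝ → Prop} [DecidablePred p]
    (hp : ∀ x y, x ≤ y → p y → p x) : p (upperMedian s) ↔ Multiset.card s < 2 * s.countP p := by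
  have := Multiset.card_pos.mpr hs
  rw [upperMedian, sort_getD_mem_iff_lt_countP hp (by omega)]
  omega

theorem half_add_le_iff_forall {x y t : ℝ} :
    (x + y) / 2 ≤ t ↔ ∀ a b, a + b = 2 * t → x ≤ a ∨ y ≤ b := by
  refine ⟨fun h a b hab => ?_, fun h => ?_⟩
  · by_contra! hlt
    linarith [hlt.1, hlt.2]
  · by_contra! hlt
    have := h (x - ((x + y) / 2 - t)) (y - ((x + y) / 2 - t)) (by ring)
    rcases this with h' | h' <;> linarith

theorem le_half_add_iff_forall {x y t : ℝ} :
    t ≤ (x + y) / 2 ↔ ∀ a b, a + b = 2 * t → a ≤ x ∨ b ≤ y := by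
  refine ⟨fun h a b hab => ?_, fun h => ?_⟩
  · by_contra! hlt
    linarith [hlt.1, hlt.2]
  · by_contra! hlt
    have := h (x + (t - (x + y) / 2)) (y + (t - (x + y) / 2)) (by ring)
    rcases this with h' | h' <;> linarith

theorem sampleMedian_le_iff {s : Multiset ℝ} (hs : s ≠ 0) {t : ℝ} :
    sampleMedian s ≤ t ↔ ∀ a b, a + b = 2 * t →
      Multiset.card s ≤ 2 * s.countP (· ≤ a) ∨ Multiset.card s < 2 * s.countP (· ≤ b) := by
  have hp (c : ℝ) : ∀ x y : ℝ, x ≤ y → y ≤ c → x ≤ c := fun _ _ => le_trans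
  simp only [sampleMedian_eq_lowerMedian_add_upperMedian, half_add_le_iff_forall,
    ← lowerMedian_mem_iff hs (hp _), ← upperMedian_mem_iff hs (hp _)]

theorem le_sampleMedian_iff {s : Multiset ℝ} (hs : s ≠ 0) {t : ℝ} :
    t ≤ sampleMedian s ↔ ∀ a b, a + b = 2 * t →
      2 * s.countP (· < a) < Multiset.card s ∨ 2 * s.countP (· < b) ≤ Multiset.card s := by
  have hp (c : ℝ) : ∀ x y : ℝ, x ≤ y → y < c → x < c := fun _ _ => lt_of_le_of_lt
  rw [sampleMedian_eq_lowerMedian_add_upperMedian, le_half_add_iff_forall]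
  refine forall₂_congr fun a b => imp_congr_right fun _ => ?_
  rw [← not_lt, ← not_lt, lowerMedian_mem_iff hs (hp a), upperMedian_mem_iff hs (hp b)]
  omega

theorem sampleMedian_add_le {A B : Multiset ℝ} (hA : A ≠ 0) (hB : B ≠ 0) {t : ℝ}
    (hAt : sampleMedian A ≤ t) (hBt : sampleMedian B ≤ t) : sampleMedian (A + B) ≤ t := by
  rw [sampleMedian_le_iff hA] at hAt
  rw [sampleMedian_le_iff hB] at hBt
  rw [sampleMedian_le_iff (by simp [hA])]
  intro a b hab
  have hAab := hAt a b hab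
  have hBab := hBt a b hab
  simp only [Multiset.card_add, Multiset.countP_add]
  rcases le_total a b with h | h
  · have := Multiset.countP_mono_left (s := A) fun x _ (hx : x ≤ a) => hx.trans h
    have := Multiset.countP_mono_left (s := B) fun x _ (hx : x ≤ a) => hx.trans h
    omega
  · have := Multiset.countP_mono_left (s := A) fun x _ (hx : x ≤ b) => hx.trans h
    have := Multiset.countP_mono_left (s := B) fun x _ (hx : x ≤ b) => hx.trans h
    omega

theorem le_sampleMedian_add {A B : Multiset ℝ} (hA : A ≠ 0) (hB : B ≠ 0) {t : ℝ}
    (hAt : t ≤ sampleMedian A) (hBt : t ≤ sampleMedian B) : t ≤ sampleMedian (A + B) := by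
  rw [le_sampleMedian_iff hA] at hAt
  rw [le_sampleMedian_iff hB] at hBt
  rw [le_sampleMedian_iff (by simp [hA])]
  intro a b hab
  have hAab := hAt a b hab
  have hBab := hBt a b hab
  simp only [Multiset.card_add, Multiset.countP_add]
  rcases le_total a b with h | h
  · have := Multiset.countP_mono_left (s := A) fun x _ (hx : x < a) => hx.trans_le h
    have := Multiset.countP_mono_left (s := B) fun x _ (hx : x < a) => hx.trans_le h
    omega
  · have := Multiset.countP_mono_left (s := A) fun x _ (hx : x < b) => hx.trans_le h
    have := Multiset.countP_mono_left (s := B) fun x _ (hx : x < b) => hx.trans_le h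
    omega

theorem sampleMedian_sum_le {ι : Type*} {s : Finset ι} (hs : s.Nonempty) {P : ι → Multiset ℝ}
    (hP : ∀ j ∈ s, P j ≠ 0) {t : ℝ} (ht : ∀ j ∈ s, sampleMedian (P j) ≤ t) :
    sampleMedian (∑ j ∈ s, P j) ≤ t :=
  (Finset.sum_induction_nonempty P (fun M => M ≠ 0 ∧ sampleMedian M ≤ t)
    (fun _ _ hA hB => ⟨by simp [hA.1], sampleMedian_add_le hA.1 hB.1 hA.2 hB.2⟩) hs
    fun j hj => ⟨hP j hj, ht j hj⟩).2

theorem le_sampleMedian_sum {ι : Type*} {s : Finset ι} (hs : s.Nonempty) {P : ι → Multiset ℝ}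
    (hP : ∀ j ∈ s, P j ≠ 0) {t : ℝ} (ht : ∀ j ∈ s, t ≤ sampleMedian (P j)) :
    t ≤ sampleMedian (∑ j ∈ s, P j) :=
  (Finset.sum_induction_nonempty P (fun M => M ≠ 0 ∧ t ≤ sampleMedian M)
    (fun _ _ hA hB => ⟨by simp [hA.1], le_sampleMedian_add hA.1 hB.1 hA.2 hB.2⟩) hs
    fun j hj => ⟨hP j hj, ht j hj⟩).2

/-- Partition property of the sample median: for a finite multiset `S`
partitioned into nonempty multisets `S_0, …, S_J`,
`min_j median(S_j) ≤ median(S) ≤ max_j median(S_j)`. -/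
theorem sampleMedian_partition_property
    (S : Multiset ℝ) (J : ℕ) (P : Fin (J + 1) → Multiset ℝ)
    (hne : ∀ j, P j ≠ 0)
    (hun : S = ∑ j : Fin (J + 1), P j) :
    Finset.univ.inf' Finset.univ_nonempty (fun j => sampleMedian (P j)) ≤ sampleMedian S ∧
      sampleMedian S ≤ Finset.univ.sup' Finset.univ_nonempty (fun j => sampleMedian (P j)) := by
  subst hun
  exact ⟨le_sampleMedian_sum Finset.univ_nonempty (fun j _ => hne j) fun j hj =>
      Finset.inf'_le (fun j => sampleMedian (P j)) hj,
    sampleMedian_sum_le Finset.univ_nonempty (fun j _ => hne j) fun j hj =>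
      Finset.le_sup' (fun j => sampleMedian (P j)) hj⟩
end

section
/- Let neighbourhoods U_0 ⊂ U_1 ⊂ ⋯ ⊂ U_K be nested finite sets of design points and θ̃_k the location estimate on U_k, θ̃_{(j)∖(j−1)} the location estimate on U_j ∖ U_{j−1}, where the location estimator satisfies the partition property (value on a set lies between the min and max of its values on the pieces of any partition). Then for any k < ℓ ≤ K: |θ̃_ℓ − θ̃_k| ≤ max_{k+1 ≤ j ≤ ℓ} |θ̃_{j∖(j−1)} − θ̃_k|. -/
/-!
Adding the shells `U j \ U (j - 1)` one at a time, each step splits `U j` into the two disjoint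
pieces `U (j - 1)` and `U j \ U (j - 1)`, so by the partition property `m (U j)` lies between
`m (U (j - 1))` and `m (U j \ U (j - 1))`. On an interval, the distance to a fixed point `m (U k)`
is maximal at an endpoint, so `|m (U j) - m (U k)|` never exceeds the maximum of the previous
bound and the distance of the new shell.
-/

lemma abs_sub_le_max_of_mem_uIcc {α : Type*} [AddCommGroup α] [LinearOrder α]
    [IsOrderedAddMonoid α] {x a b : α} (h : x ∈ Set.uIcc a b) (c : α) :
    |x - c| ≤ max |a - c| |b - c| := by
  rcases Set.mem_uIcc.1 h with ⟨hax, hxb⟩ | ⟨hbx, hxa⟩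
  · exact abs_le_max_abs_abs (sub_le_sub_right hax c) (sub_le_sub_right hxb c)
  · exact (abs_le_max_abs_abs (sub_le_sub_right hbx c) (sub_le_sub_right hxa c)).trans_eq
      (max_comm _ _)

section

variable {ι : Type*} [DecidableEq ι]

def HasPartitionProperty (m : Finset ι → ℝ) : Prop :=
  ∀ (n : ℕ) (T : Finset ι) (P : Fin (n + 1) → Finset ι),
    (∀ j, (P j).Nonempty) → (∀ j j', j ≠ j' → Disjoint (P j) (P j')) →
    T = Finset.univ.biUnion P →
    (Finset.univ.inf' Finset.univ_nonempty (fun j => m (P j)) ≤ m T ∧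
      m T ≤ Finset.univ.sup' Finset.univ_nonempty (fun j => m (P j)))

namespace HasPartitionProperty

variable {m : Finset ι → ℝ}

lemma union_mem_uIcc (hm : HasPartitionProperty m) {A B : Finset ι} (hA : A.Nonempty)
    (hB : B.Nonempty) (hAB : Disjoint A B) : m (A ∪ B) ∈ Set.uIcc (m A) (m B) := by
  have := hm 1 (A ∪ B) ![A, B] (by simp [Fin.forall_fin_two, hA, hB])
    (by simp [Fin.forall_fin_two, hAB, hAB.symm]) (by ext; simp [Fin.exists_fin_two])
  simpa [Set.uIcc, Fin.univ_succ] using this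

lemma abs_sub_le_max_of_subset (hm : HasPartitionProperty m) {A B : Finset ι} (hAB : A ⊆ B)
    (c : ℝ) : |m B - c| ≤ max |m A - c| |m (B \ A) - c| := by
  rcases A.eq_empty_or_nonempty with rfl | hA
  · simp
  rcases (B \ A).eq_empty_or_nonempty with hBA | hBA
  · rw [(Finset.sdiff_eq_empty_iff_subset.1 hBA).antisymm hAB]
    exact le_max_left _ _
  have := abs_sub_le_max_of_mem_uIcc (hm.union_mem_uIcc hA hBA Finset.disjoint_sdiff) c
  rwa [Finset.union_sdiff_of_subset hAB] at this

lemma abs_sub_le_sup'_shells (hm : HasPartitionProperty m) {U : ℕ → Finset ι} {k ℓ : ℕ}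
    (hU : ∀ j, k ≤ j → j < ℓ → U j ⊆ U (j + 1)) (hkl : k < ℓ) :
    |m (U ℓ) - m (U k)| ≤ (Finset.Icc (k + 1) ℓ).sup' (Finset.nonempty_Icc.mpr hkl)
      (fun j => |m (U j \ U (j - 1)) - m (U k)|) := by
  induction ℓ, hkl using Nat.le_induction with
  | base => simpa using hm.abs_sub_le_max_of_subset (hU k le_rfl k.lt_succ_self) (m (U k))
  | succ ℓ hkℓ ih =>
    refine (hm.abs_sub_le_max_of_subset (hU ℓ (by omega) ℓ.lt_succ_self) _).trans
      (max_le ?_ ?_)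
    · exact (ih fun j hkj hjℓ => hU j hkj (by omega)).trans
        (Finset.sup'_mono _ (Finset.Icc_subset_Icc_right ℓ.le_succ) _)
    · exact Finset.le_sup' (fun j => |m (U j \ U (j - 1)) - m (U k)|)
        (Finset.mem_Icc.2 ⟨by omega, le_rfl⟩)

end HasPartitionProperty

end

theorem telescoping_bound_via_partition_property_general
    {ι : Type*} [DecidableEq ι] (m : Finset ι → ℝ)
    (hm : ∀ (n : ℕ) (T : Finset ι) (P : Fin (n + 1) → Finset ι),
      (∀ j, (P j).Nonempty) → (∀ j j', j ≠ j' → Disjoint (P j) (P j')) →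
      T = Finset.univ.biUnion P →
      (Finset.univ.inf' Finset.univ_nonempty (fun j => m (P j)) ≤ m T ∧
        m T ≤ Finset.univ.sup' Finset.univ_nonempty (fun j => m (P j))))
    (K : ℕ) (U : ℕ → Finset ι)
    (hnest : ∀ j, j < K → U j ⊂ U (j + 1)) :
    ∀ k ℓ : ℕ, ∀ hkl : k < ℓ, ℓ ≤ K →
      |m (U ℓ) - m (U k)| ≤
        (Finset.Icc (k + 1) ℓ).sup' (Finset.nonempty_Icc.mpr hkl)
          (fun j => |m (U j \ U (j - 1)) - m (U k)|) := by
  intro k ℓ hkl hℓK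
  exact HasPartitionProperty.abs_sub_le_sup'_shells hm
    (fun j _ hjℓ => (hnest j (by omega)).subset) hkl

/-- For a location estimator `m` on finite sets of design points satisfying the
partition property (its value on a set lies between the min and max of its
values on the pieces of any partition), and nested neighbourhoods
`U 0 ⊊ U 1 ⊊ ⋯ ⊊ U K`, one has for all `k < ℓ ≤ K`:
`|m (U ℓ) − m (U k)| ≤ max_{k+1 ≤ j ≤ ℓ} |m (U j \ U (j−1)) − m (U k)|`. -/
theorem telescoping_bound_via_partition_property
    {ι : Type*} [DecidableEq ι] (m : Finset ι → ℝ)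
    (hm : ∀ (n : ℕ) (T : Finset ι) (P : Fin (n + 1) → Finset ι),
      (∀ j, (P j).Nonempty) → (∀ j j', j ≠ j' → Disjoint (P j) (P j')) →
      T = Finset.univ.biUnion P →
      (Finset.univ.inf' Finset.univ_nonempty (fun j => m (P j)) ≤ m T ∧
        m T ≤ Finset.univ.sup' Finset.univ_nonempty (fun j => m (P j))))
    (K : ℕ) (U : ℕ → Finset ι)
    (hU0 : (U 0).Nonempty)
    (hnest : ∀ j, j < K → U j ⊂ U (j + 1)) :
    ∀ k ℓ : ℕ, ∀ hkl : k < ℓ, ℓ ≤ K →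
      |m (U ℓ) - m (U k)| ≤
        (Finset.Icc (k + 1) ℓ).sup' (Finset.nonempty_Icc.mpr hkl)
          (fun j => |m (U j \ U (j - 1)) - m (U k)|) :=
  telescoping_bound_via_partition_property_general m hm K U hnest
end

section
/- Let ε_1, …, ε_{2m+1} (m ≥ 2) be i.i.d. with Lebesgue density f_ε and cdf F_ε such that E|ε_1|^r < ∞ for some r ≥ 1. Then there exists a constant C (independent of m) such that E[|med(ε_1,…,ε_{2m+1})|^{3r}] ≤ C uniformly in m ≥ 2; i.e., the 3r-th moment of the sample median is finite and uniformly bounded over m. -/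
/-!
If `|med| > t`, then at least `m + 1` of the `2m+1` observations exceed `t`, or at least
`m + 1` lie below `-t`. By independence and a union bound over `(m+1)`-element index sets,
`P(|med| > t) ≤ 2 C(2m+1, m+1) q(t)^(m+1) ≤ (4 q(t))^(m+1)` with `q(t) = P(|ε₁| > t)`; since
a probability is at most `1`, for `m ≥ 2` this gives `P(|med| > t) ≤ 64 q(t)^3` uniformly in `m`.
Markov's inequality `t^r q(t) ≤ E|ε₁|^r` turns `q(t)^3 t^(3r-1)` into
`(E|ε₁|^r)^2 q(t) t^(r-1)`, and the layer-cake formula gives `E|med|^(3r) ≤ 192 (E|ε₁|^r)^3`.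
-/

open MeasureTheory ProbabilityTheory
open scoped ENNReal Finset

theorem List.countP_ofFn {α : Type*} {n : ℕ} (v : Fin n → α) (p : α → Bool) :
    (List.ofFn v).countP p = #{i | p (v i)} := by
  induction n with
  | zero => simp
  | succ n ih =>
    rw [List.ofFn_succ, List.countP_cons, ih, Finset.card_filter, Finset.card_filter,
      Fin.sum_univ_succ, add_comm]

theorem List.SortedLE.getElem_mem_iff_lt_countP {α : Type*} [Preorder α] {l : List α}
    (hl : l.SortedLE) {S : Set α} [DecidablePred (· ∈ S)] (hS : IsLowerSet S) {k : ℕ}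
    (hk : k < l.length) : l[k] ∈ S ↔ k < l.countP (· ∈ S) := by
  constructor
  · intro hkS
    have hprefix : (l.take (k + 1)).countP (· ∈ S) = k + 1 := by
      rw [List.countP_eq_length.2, List.length_take, min_eq_left hk]
      intro a ha
      obtain ⟨j, hj, rfl⟩ := List.mem_take_iff_getElem.1 ha
      exact decide_eq_true (hS (hl (Fin.mk_le_mk.2 (by omega : j ≤ k))) hkS)
    have := (List.take_sublist (k + 1) l).countP_le (p := (· ∈ S))
    omega
  · intro hlt
    by_contra hkS
    have hsuffix : (l.drop k).countP (· ∈ S) = 0 := by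
      refine List.countP_eq_zero.2 fun a ha haS => hkS ?_
      obtain ⟨j, hj, rfl⟩ := List.mem_drop_iff_getElem.1 ha
      exact hS (hl (Fin.mk_le_mk.2 (by omega : k ≤ k + j))) (of_decide_eq_true haS)
    have hsplit := congrArg (List.countP (· ∈ S)) (List.take_append_drop k l)
    rw [List.countP_append, hsuffix] at hsplit
    have := (List.countP_le_length (p := (· ∈ S))).trans (List.length_take_le k l)
    omega

/-- The `k`-th smallest entry of `v`, counting from `0` (and `0` if `k ≥ n`); the median of
`2 * m + 1` entries is `orderStat v m`. -/
noncomputable def orderStat {n : ℕ} (v : Fin n → ℝ) (k : ℕ) : ℝ :=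
  ((List.ofFn v).insertionSort (· ≤ ·)).getD k 0

section OrderStat

variable {n k : ℕ} (v : Fin n → ℝ) {S : Set ℝ} [DecidablePred (· ∈ S)]

theorem orderStat_mem_iff_of_isLowerSet (hk : k < n) (hS : IsLowerSet S) :
    orderStat v k ∈ S ↔ k < #{i | v i ∈ S} := by
  have hlen : k < ((List.ofFn v).insertionSort (· ≤ ·)).length := by simpa using hk
  rw [orderStat, List.getD_eq_getElem _ _ hlen,
    List.sortedLE_insertionSort.getElem_mem_iff_lt_countP hS hlen,
    (List.perm_insertionSort _ _).countP_eq, List.countP_ofFn]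
  simp only [decide_eq_true_eq]

theorem orderStat_mem_iff_of_isUpperSet (hk : k < n) (hS : IsUpperSet S) :
    orderStat v k ∈ S ↔ n - k ≤ #{i | v i ∈ S} := by
  have hsplit := Finset.card_filter_add_card_filter_not (s := Finset.univ) (fun i => v i ∈ S)
  rw [Finset.card_univ, Fintype.card_fin] at hsplit
  rw [← not_iff_not, ← Set.mem_compl_iff, orderStat_mem_iff_of_isLowerSet v hk hS.compl]
  simp only [Set.mem_compl_iff]
  omega

theorem measurable_orderStat (k : ℕ) : Measurable fun v : Fin n → ℝ => orderStat v k := by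
  rcases lt_or_ge k n with hk | hk
  · refine measurable_of_Iic fun t => ?_
    have hcount : Measurable fun v : Fin n → ℝ => #{i | v i ∈ Set.Iic t} := by
      simp only [Finset.card_filter]
      exact Finset.measurable_sum _ fun i _ =>
        Measurable.ite (measurable_pi_apply i measurableSet_Iic) measurable_const
          measurable_const
    have hpre : (fun v : Fin n → ℝ => orderStat v k) ⁻¹' Set.Iic t
        = (fun v : Fin n → ℝ => #{i | v i ∈ Set.Iic t}) ⁻¹' Set.Ioi k := by
      ext v
      exact orderStat_mem_iff_of_isLowerSet v hk (isLowerSet_Iic t)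
    exact hpre ▸ hcount measurableSet_Ioi
  · have hzero : ∀ v : Fin n → ℝ, orderStat v k = 0 := fun v =>
      List.getD_eq_default _ _ (by simpa using hk)
    simp only [hzero, measurable_const]

end OrderStat

theorem measure_le_card_filter_mem_le {Ω ι β : Type*} [MeasurableSpace Ω] [MeasurableSpace β]
    [Fintype ι] {μ : Measure Ω} {X : ι → Ω → β} (hX : iIndepFun X μ) {s : Set β}
    [DecidablePred (· ∈ s)] (hs : MeasurableSet s) {q : ℝ≥0∞}
    (hq : ∀ i, μ (X i ⁻¹' s) ≤ q) (k : ℕ) :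
    μ {ω | k ≤ #{i | X i ω ∈ s}} ≤ (Fintype.card ι).choose k * q ^ k := by
  have hcover : {ω | k ≤ #{i | X i ω ∈ s}}
      ⊆ ⋃ T ∈ Finset.powersetCard k Finset.univ, ⋂ i ∈ T, X i ⁻¹' s := by
    intro ω hω
    obtain ⟨T, hT, hTcard⟩ := Finset.exists_subset_card_eq hω
    refine Set.mem_biUnion (Finset.mem_powersetCard.2 ⟨Finset.subset_univ T, hTcard⟩) ?_
    exact Set.mem_iInter₂.2 fun i hi => (Finset.mem_filter.1 (hT hi)).2
  have hinter : ∀ T ∈ Finset.powersetCard k Finset.univ, μ (⋂ i ∈ T, X i ⁻¹' s) ≤ q ^ k := by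
    intro T hT
    rw [hX.measure_inter_preimage_eq_mul T fun i _ => hs, ← (Finset.mem_powersetCard.1 hT).2]
    exact Finset.prod_le_pow_card _ _ _ fun i _ => hq i
  calc μ {ω | k ≤ #{i | X i ω ∈ s}}
      ≤ ∑ T ∈ Finset.powersetCard k Finset.univ, μ (⋂ i ∈ T, X i ⁻¹' s) :=
        (measure_mono hcover).trans (measure_biUnion_finset_le _ _)
    _ ≤ (Fintype.card ι).choose k * q ^ k := by
        simpa [Finset.card_powersetCard] using Finset.sum_le_card_nsmul _ _ _ hinter

theorem measure_lt_abs_orderStat_le {Ω : Type*} [MeasurableSpace Ω] {μ : Measure Ω} {m : ℕ}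
    {X : Fin (2 * m + 1) → Ω → ℝ} (hX : iIndepFun X μ) {t : ℝ} {q : ℝ≥0∞}
    (hq : ∀ i, μ {ω | t < |X i ω|} ≤ q) :
    μ {ω | t < |orderStat (fun i => X i ω) m|} ≤ (4 * q) ^ (m + 1) := by
  have hm : m < 2 * m + 1 := by omega
  have hcover : {ω | t < |orderStat (fun i => X i ω) m|}
      ⊆ {ω | m + 1 ≤ #{i | X i ω ∈ Set.Ioi t}}
        ∪ {ω | m + 1 ≤ #{i | X i ω ∈ Set.Iio (-t)}} := by
    intro ω (hω : t < |_|)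
    rcases lt_abs.1 hω with hpos | hneg
    · left
      have h := (orderStat_mem_iff_of_isUpperSet _ hm (isUpperSet_Ioi t)).1 hpos
      rwa [show 2 * m + 1 - m = m + 1 by omega] at h
    · right
      exact (orderStat_mem_iff_of_isLowerSet _ hm (isLowerSet_Iio (-t))).1
        (show _ < -t by linarith)
  have hside : ∀ s : Set ℝ, s ⊆ {x | t < |x|} → ∀ i, μ (X i ⁻¹' s) ≤ q :=
    fun s hs i => (measure_mono (Set.preimage_mono hs)).trans (hq i)
  have hcount : ∀ s : Set ℝ, [DecidablePred (· ∈ s)] → MeasurableSet s → s ⊆ {x | t < |x|} →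
      μ {ω | m + 1 ≤ #{i | X i ω ∈ s}} ≤ 2 ^ (2 * m + 1) * q ^ (m + 1) := by
    intro s _ hs hst
    calc _ ≤ (2 * m + 1).choose (m + 1) * q ^ (m + 1) := by
          simpa using measure_le_card_filter_mem_le hX hs (hside s hst) (m + 1)
      _ ≤ 2 ^ (2 * m + 1) * q ^ (m + 1) := by
          gcongr
          exact_mod_cast Nat.choose_le_two_pow _ _
  calc μ {ω | t < |orderStat (fun i => X i ω) m|}
      ≤ 2 ^ (2 * m + 1) * q ^ (m + 1) + 2 ^ (2 * m + 1) * q ^ (m + 1) :=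
        (measure_mono hcover).trans <| (measure_union_le _ _).trans <| add_le_add
          (hcount _ measurableSet_Ioi fun x hx => hx.out.trans_le (le_abs_self x))
          (hcount _ measurableSet_Iio fun x (hx : x < -t) =>
            (lt_neg.1 hx).trans_le (neg_le_abs x))
    _ = (4 * q) ^ (m + 1) := by
        rw [mul_pow, show (4 : ℝ≥0∞) = 2 ^ 2 by norm_num, ← pow_mul]
        ring

theorem lintegral_rpow_le_of_measure_lt_le_pow {Ω : Type*} [MeasurableSpace Ω] {μ : Measure Ω}
    {X Y : Ω → ℝ} (hX : AEMeasurable X μ) (hY : AEMeasurable Y μ) {p : ℝ} (hp : 0 < p) {n : ℕ}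
    {K : ℝ≥0∞} (htail : ∀ t > 0, μ {ω | t < |X ω|} ≤ K * μ {ω | t < |Y ω|} ^ (n + 1)) :
    ∫⁻ ω, ENNReal.ofReal (|X ω| ^ ((n + 1) * p)) ∂μ
      ≤ (n + 1) * K * (∫⁻ ω, ENNReal.ofReal (|Y ω| ^ p) ∂μ) ^ (n + 1) := by
  set L := ∫⁻ ω, ENNReal.ofReal (|Y ω| ^ p) ∂μ
  set Q : ℝ → ℝ≥0∞ := fun t => μ {ω | t < |Y ω|}
  have hmarkov : ∀ t > 0, ENNReal.ofReal (t ^ p) * Q t ≤ L := fun t ht =>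
    calc ENNReal.ofReal (t ^ p) * Q t
        ≤ ENNReal.ofReal (t ^ p)
            * μ {ω | ENNReal.ofReal (t ^ p) ≤ ENNReal.ofReal (|Y ω| ^ p)} :=
          mul_le_mul' le_rfl (measure_mono fun ω (hω : t < |Y ω|) =>
            ENNReal.ofReal_le_ofReal (Real.rpow_le_rpow ht.le hω.le hp.le))
      _ ≤ L := mul_meas_ge_le_lintegral₀ (hY.abs.pow_const p).ennreal_ofReal _
  have hpoint : ∀ t > 0, μ {ω | t < |X ω|} * ENNReal.ofReal (t ^ ((n + 1) * p - 1))
      ≤ K * L ^ n * (Q t * ENNReal.ofReal (t ^ (p - 1))) := by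
    intro t ht
    have hsplit : ENNReal.ofReal (t ^ ((n + 1) * p - 1))
        = ENNReal.ofReal (t ^ p) ^ n * ENNReal.ofReal (t ^ (p - 1)) := by
      rw [← ENNReal.ofReal_pow (by positivity), ← ENNReal.ofReal_mul (by positivity),
        ← Real.rpow_natCast, ← Real.rpow_mul ht.le, ← Real.rpow_add ht]
      ring_nf
    calc μ {ω | t < |X ω|} * ENNReal.ofReal (t ^ ((n + 1) * p - 1))
        ≤ K * Q t ^ (n + 1) * ENNReal.ofReal (t ^ ((n + 1) * p - 1)) :=
          mul_le_mul' (htail t ht) le_rfl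
      _ = K * (ENNReal.ofReal (t ^ p) * Q t) ^ n
            * (Q t * ENNReal.ofReal (t ^ (p - 1))) := by
          rw [hsplit]
          ring
      _ ≤ K * L ^ n * (Q t * ENNReal.ofReal (t ^ (p - 1))) := by
          gcongr
          exact hmarkov t ht
  have hQ : Measurable Q := Antitone.measurable fun t s hts =>
    measure_mono fun ω (hω : s < |Y ω|) => hts.trans_lt hω
  have hlayerY : ENNReal.ofReal p * ∫⁻ t in Set.Ioi 0, Q t * ENNReal.ofReal (t ^ (p - 1)) = L :=
    (lintegral_rpow_eq_lintegral_meas_lt_mul μ (ae_of_all _ fun ω => abs_nonneg _) hY.abs hp).symm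
  calc ∫⁻ ω, ENNReal.ofReal (|X ω| ^ ((n + 1) * p)) ∂μ
      = ENNReal.ofReal ((n + 1) * p)
          * ∫⁻ t in Set.Ioi 0, μ {ω | t < |X ω|} * ENNReal.ofReal (t ^ ((n + 1) * p - 1)) :=
        lintegral_rpow_eq_lintegral_meas_lt_mul μ (ae_of_all _ fun ω => abs_nonneg _) hX.abs
          (by positivity)
    _ ≤ ENNReal.ofReal ((n + 1) * p)
          * ∫⁻ t in Set.Ioi 0, K * L ^ n * (Q t * ENNReal.ofReal (t ^ (p - 1))) :=
        mul_le_mul' le_rfl (setLIntegral_mono' measurableSet_Ioi hpoint)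
    _ = (n + 1) * K * L ^ n
          * (ENNReal.ofReal p * ∫⁻ t in Set.Ioi 0, Q t * ENNReal.ofReal (t ^ (p - 1))) := by
        rw [lintegral_const_mul _ (f := fun t => Q t * ENNReal.ofReal (t ^ (p - 1)))
          (hQ.mul (by fun_prop)), ENNReal.ofReal_mul (by positivity),
          show ((n : ℝ) + 1) = ((n + 1 : ℕ) : ℝ) by push_cast; ring, ENNReal.ofReal_natCast]
        push_cast
        ring
    _ = (n + 1) * K * L ^ (n + 1) := by
        rw [hlayerY]
        ring

theorem median_moment_uniformly_bounded_general
    {Ω : Type*} [MeasurableSpace Ω] (P : Measure Ω) [IsProbabilityMeasure P]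
    (ε : ℕ → Ω → ℝ) (fε : ℝ → ℝ) (r : ℝ) (hr : 1 ≤ r)
    (hmeas : ∀ i, Measurable (ε i))
    (hindep : iIndepFun ε P)
    (hdist : ∀ i, Measure.map (ε i) P
      = volume.withDensity (fun z => ENNReal.ofReal (fε z)))
    (hmom : Integrable (fun ω => |ε 0 ω| ^ r) P) :
    ∃ C : ℝ, ∀ m : ℕ, 2 ≤ m →
      ∫ ω, |((List.ofFn fun i : Fin (2 * m + 1) => ε i ω).insertionSort
          (· ≤ ·)).getD m 0| ^ (3 * r) ∂P ≤ C := by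
  set L := ∫⁻ ω, ENNReal.ofReal (|ε 0 ω| ^ r) ∂P
  refine ⟨(3 * 64 * L ^ 3).toReal, fun m hm => ?_⟩
  set M : Ω → ℝ := fun ω => orderStat (fun i : Fin (2 * m + 1) => ε i ω) m
  have hM : Measurable M :=
    (measurable_orderStat m).comp (measurable_pi_lambda _ fun i => hmeas i)
  have hident : ∀ i t, P {ω | t < |ε i ω|} = P {ω | t < |ε 0 ω|} := fun i t =>
    IdentDistrib.measure_mem_eq
      ⟨(hmeas i).aemeasurable, (hmeas 0).aemeasurable, by rw [hdist, hdist]⟩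
      (measurableSet_lt measurable_const measurable_abs)
  have htail : ∀ t > 0, P {ω | t < |M ω|} ≤ 64 * P {ω | t < |ε 0 ω|} ^ (2 + 1) := by
    intro t _
    set q := P {ω | t < |ε 0 ω|}
    have hmed := measure_lt_abs_orderStat_le (hindep.precomp Fin.val_injective)
      (fun i => (hident i t).le) (m := m)
    calc P {ω | t < |M ω|} ≤ (4 * q) ^ 3 := by
          rcases le_total (4 * q) 1 with hq | hq
          · exact hmed.trans (pow_le_pow_right_of_le_one' hq (by omega))
          · exact prob_le_one.trans (one_le_pow_of_one_le' hq _)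
      _ = 64 * q ^ (2 + 1) := by ring
  have hmoment := lintegral_rpow_le_of_measure_lt_le_pow hM.aemeasurable
    (hmeas 0).aemeasurable (by linarith) htail
  change ∫ ω, |M ω| ^ (3 * r) ∂P ≤ _
  rw [integral_eq_lintegral_of_nonneg_ae (ae_of_all _ fun ω => by positivity)
    (hM.abs.pow_const _).aestronglyMeasurable]
  refine ENNReal.toReal_mono (by finiteness [hmom.lintegral_lt_top]) ?_
  convert hmoment using 4 <;> norm_num

/-- Uniform boundedness of the `3r`-th moment of the sample median of `2m+1`
i.i.d. observations with a Lebesgue density, given `E|ε₁|^r < ∞` for some `r ≥ 1`: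
there is a constant `C` (independent of `m`) with
`E[|med(ε₁,…,ε_{2m+1})|^{3r}] ≤ C` for all `m ≥ 2`. -/
theorem median_moment_uniformly_bounded
    {Ω : Type*} [MeasurableSpace Ω] (P : Measure Ω) [IsProbabilityMeasure P]
    (ε : ℕ → Ω → ℝ) (fε : ℝ → ℝ) (r : ℝ) (hr : 1 ≤ r)
    (hfnn : ∀ x, 0 ≤ fε x)
    (hmeas : ∀ i, Measurable (ε i))
    (hindep : iIndepFun ε P)
    (hdist : ∀ i, Measure.map (ε i) P
      = volume.withDensity (fun z => ENNReal.ofReal (fε z)))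
    (hmom : Integrable (fun ω => |ε 0 ω| ^ r) P) :
    ∃ C : ℝ, ∀ m : ℕ, 2 ≤ m →
      ∫ ω, |((List.ofFn fun i : Fin (2 * m + 1) => ε i ω).insertionSort
          (· ≤ ·)).getD m 0| ^ (3 * r) ∂P ≤ C :=
  median_moment_uniformly_bounded_general P ε fε r hr hmeas hindep hdist hmom
end

section
/- Suppose for each m the sample ε_1,…,ε_{2m+1} can be coupled on one probability space with a standard normal Z so that |med(ε) − Z/(√(4(2m+1)) f_ε(0))| ≤ C(1+Z²)/(2m+1) whenever |Z| ≤ δ√(2m+1), with constants C, δ > 0 independent of m. Then for any sequence τ_m → ∞ with τ_m = o(√m): limsup_{m→∞} P(2√(2m+1) f_ε(0) |med(ε)| > τ_m) · exp(τ_m²/8) ≤ 2. -/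
open MeasureTheory ProbabilityTheory Filter
open scoped Topology

lemma gauss_upper_tail {t : ℝ} (ht : 1 ≤ t) :
    gaussianReal 0 1 {x : ℝ | t < x} ≤ ENNReal.ofReal (Real.exp (-t ^ 2 / 2)) := by
  have ht0 : (0:ℝ) < t := lt_of_lt_of_le one_pos ht
  rw [gaussianReal_apply_eq_integral 0 one_ne_zero]
  refine ENNReal.ofReal_le_ofReal ?_
  have hIoi : {x : ℝ | t < x} = Set.Ioi t := rfl
  rw [hIoi]
  have hint : IntegrableOn (fun x : ℝ => t * Real.exp (t^2/2) * Real.exp (-t * x))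
      (Set.Ioi t) := (exp_neg_integrableOn_Ioi t ht0).const_mul _
  have hle : ∀ x ∈ Set.Ioi t,
      gaussianPDFReal 0 1 x ≤ t * Real.exp (t^2/2) * Real.exp (-t*x) := by
    intro x _
    unfold gaussianPDFReal
    have h1 : ((1 : NNReal) : ℝ) = 1 := rfl
    rw [h1]
    have hπ : (1:ℝ) ≤ Real.sqrt (2 * Real.pi * 1) := by
      have h := Real.sqrt_le_sqrt (show (1:ℝ) ≤ 2 * Real.pi * 1 by nlinarith [Real.pi_gt_three])
      rwa [Real.sqrt_one] at h
    have hinv : (Real.sqrt (2 * Real.pi * 1))⁻¹ ≤ 1 := by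
      rw [inv_le_one_iff₀]; right; exact hπ
    have hexp : Real.exp (-(x-0)^2/(2*1)) ≤ Real.exp (t^2/2) * Real.exp (-t*x) := by
      rw [← Real.exp_add]
      exact Real.exp_le_exp.2 (by nlinarith [sq_nonneg (x - t)])
    have hexp0 : (0:ℝ) < Real.exp (-(x-0)^2/(2*1)) := Real.exp_pos _
    have hexp1 : (0:ℝ) < Real.exp (t^2/2) * Real.exp (-t*x) := by positivity
    calc (Real.sqrt (2 * Real.pi * 1))⁻¹ * Real.exp (-(x-0)^2/(2*1))
        ≤ 1 * Real.exp (-(x-0)^2/(2*1)) := by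
          exact mul_le_mul_of_nonneg_right hinv hexp0.le
      _ ≤ 1 * (Real.exp (t^2/2) * Real.exp (-t*x)) := by
          rw [one_mul, one_mul]; exact hexp
      _ ≤ t * Real.exp (t^2/2) * Real.exp (-t*x) := by nlinarith
  calc ∫ x in Set.Ioi t, gaussianPDFReal 0 1 x
      ≤ ∫ x in Set.Ioi t, t * Real.exp (t^2/2) * Real.exp (-t*x) :=
        setIntegral_mono_on (integrable_gaussianPDFReal 0 1).integrableOn hint
          measurableSet_Ioi hle
    _ = Real.exp (-t^2/2) := by
        rw [integral_const_mul]
        have hsub : ∫ x in Set.Ioi t, Real.exp (-t*x)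
            = t⁻¹ • ∫ y in Set.Ioi (t*t), Real.exp (-y) := by
          rw [← MeasureTheory.integral_comp_mul_left_Ioi (fun y => Real.exp (-y)) t ht0]
          simp [neg_mul]
        rw [hsub, integral_exp_neg_Ioi, smul_eq_mul, ← mul_assoc]
        rw [show t * Real.exp (t^2/2) * t⁻¹ = Real.exp (t^2/2) * (t * t⁻¹) by ring,
          mul_inv_cancel₀ (ne_of_gt ht0), mul_one, ← Real.exp_add]
        ring_nf

lemma gauss_abs_tail {t : ℝ} (ht : 1 ≤ t) :
    (gaussianReal 0 1 {x : ℝ | t < |x|}).toReal ≤ 2 * Real.exp (-t ^ 2 / 2) := by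
  have hneg : gaussianReal 0 1 {x : ℝ | x < -t}
      ≤ ENNReal.ofReal (Real.exp (-t^2/2)) := by
    have hmap := gaussianReal_map_const_mul (μ := 0) (v := 1) (-1)
    have h1 : ∀ h, (NNReal.mk ((-1:ℝ)^2) h) * 1 = 1 := fun h => by
      ext; norm_num
    rw [h1, mul_zero] at hmap
    have heq : gaussianReal 0 1 {x : ℝ | x < -t} = gaussianReal 0 1 {x : ℝ | t < x} := by
      conv_lhs => rw [← hmap]
      rw [show {x:ℝ | x < -t} = Set.Iio (-t) from rfl,
        Measure.map_apply (measurable_const_mul (-1)) measurableSet_Iio]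
      congr 1
      ext x
      simp only [Set.mem_preimage, Set.mem_Iio, Set.mem_setOf_eq]
      constructor <;> intro h <;> linarith
    rw [heq]
    exact gauss_upper_tail ht
  have hsub : {x : ℝ | t < |x|} ⊆ {x : ℝ | t < x} ∪ {x : ℝ | x < -t} := by
    intro x hx
    rw [Set.mem_setOf_eq] at hx
    rcases abs_cases x with ⟨h, _⟩ | ⟨h, _⟩
    · left; rw [Set.mem_setOf_eq]; linarith
    · right; rw [Set.mem_setOf_eq]; linarith
  have hpos := gauss_upper_tail ht
  have hchain : gaussianReal 0 1 {x : ℝ | t < |x|}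
      ≤ ENNReal.ofReal (2 * Real.exp (-t^2/2)) := by
    calc gaussianReal 0 1 {x : ℝ | t < |x|}
        ≤ gaussianReal 0 1 ({x : ℝ | t < x} ∪ {x : ℝ | x < -t}) := measure_mono hsub
      _ ≤ gaussianReal 0 1 {x : ℝ | t < x} + gaussianReal 0 1 {x : ℝ | x < -t} :=
          measure_union_le _ _
      _ ≤ ENNReal.ofReal (Real.exp (-t^2/2)) + ENNReal.ofReal (Real.exp (-t^2/2)) :=
          add_le_add hpos hneg
      _ = ENNReal.ofReal (2 * Real.exp (-t^2/2)) := by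
          rw [← ENNReal.ofReal_add (Real.exp_nonneg _) (Real.exp_nonneg _)]; ring_nf
  exact ENNReal.toReal_le_of_le_ofReal (by positivity) hchain

set_option maxHeartbeats 1000000 in
/-- Moderate deviation bound for the sample median via quantile coupling:
if for each `m` the median `M m` of `2m+1` observations is coupled with a
standard normal `Z m` so that
`|M m − Z m/(√(4(2m+1)) fε(0))| ≤ C(1+Z m²)/(2m+1)` on `{|Z m| ≤ δ√(2m+1)}`,
then for `τ_m → ∞` with `τ_m = o(√m)`:
`limsup_m P(2√(2m+1) fε(0) |M m| > τ_m) · exp(τ_m²/8) ≤ 2`. -/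
theorem median_moderate_deviation_via_coupling
    {Ω : Type*} [MeasurableSpace Ω] (P : Measure Ω) [IsProbabilityMeasure P]
    (C δ fε0 : ℝ) (hC : 0 < C) (hδ : 0 < δ) (hf : 0 < fε0)
    (M Z : ℕ → Ω → ℝ)
    (hMmeas : ∀ m, Measurable (M m)) (hZmeas : ∀ m, Measurable (Z m))
    (hZ : ∀ m, Measure.map (Z m) P = gaussianReal 0 1)
    (hcouple : ∀ m : ℕ, ∀ᵐ ω ∂P,
      |Z m ω| ≤ δ * Real.sqrt (2 * (m : ℝ) + 1) →
        |M m ω - Z m ω / (Real.sqrt (4 * (2 * (m : ℝ) + 1)) * fε0)|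
          ≤ C * (1 + Z m ω ^ 2) / (2 * (m : ℝ) + 1))
    (τ : ℕ → ℝ)
    (hτ : Tendsto τ atTop atTop)
    (hτo : (fun m : ℕ => τ m) =o[atTop] fun m : ℕ => Real.sqrt m) :
    Filter.limsup
        (fun m : ℕ =>
          (P {ω | τ m < 2 * Real.sqrt (2 * (m : ℝ) + 1) * fε0 * |M m ω|}).toReal
            * Real.exp (τ m ^ 2 / 8)) atTop ≤ 2 := by
  set u : ℕ → ℝ := fun m : ℕ =>
    (P {ω | τ m < 2 * Real.sqrt (2 * (m : ℝ) + 1) * fε0 * |M m ω|}).toReal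
      * Real.exp (τ m ^ 2 / 8) with hu
  set v : ℕ → ℝ := fun m : ℕ => 2 + 2 * Real.exp (-(δ^2/2) * m) with hv
  -- limit of v
  have hvlim : Tendsto v atTop (𝓝 2) := by
    have h1 : Tendsto (fun m : ℕ => (δ^2/2) * (m:ℝ)) atTop atTop :=
      Tendsto.const_mul_atTop (by positivity) tendsto_natCast_atTop_atTop
    have h2 : Tendsto (fun m : ℕ => -(δ^2/2) * (m:ℝ)) atTop atBot := by
      have h := tendsto_neg_atTop_atBot.comp h1
      have heq : (fun m : ℕ => -(δ^2/2) * (m:ℝ))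
          = (Neg.neg ∘ fun m : ℕ => (δ^2/2) * (m:ℝ)) := by
        funext x; simp [Function.comp, neg_mul]
      rw [heq]; exact h
    have h3 : Tendsto (fun m : ℕ => Real.exp (-(δ^2/2) * (m:ℝ))) atTop (𝓝 0) :=
      Real.tendsto_exp_atBot.comp h2
    have h4 := h3.const_mul 2
    have h5 := tendsto_const_nhds (x := (2:ℝ)) (f := atTop (α := ℕ)) |>.add h4
    rw [hv]
    simpa [neg_mul] using h5
  -- eventually sqrt is large
  have hsqrt_ev : ∀ a : ℝ, ∀ᶠ m : ℕ in atTop, a ≤ Real.sqrt (2*(m:ℝ)+1) := by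
    intro a
    filter_upwards [eventually_ge_atTop ⌈a^2⌉₊] with m hm
    have hm' : (a^2 : ℝ) ≤ 2*(m:ℝ)+1 := by
      have h1 := Nat.le_ceil (a^2)
      have h2 : ((⌈a^2⌉₊ : ℕ) : ℝ) ≤ (m : ℝ) := Nat.cast_le.2 hm
      have h3 : (0:ℝ) ≤ m := Nat.cast_nonneg m
      linarith
    calc a ≤ |a| := le_abs_self a
      _ = Real.sqrt (a^2) := (Real.sqrt_sq_eq_abs a).symm
      _ ≤ Real.sqrt (2*(m:ℝ)+1) := Real.sqrt_le_sqrt hm'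
  -- little-o wrt sqrt(2m+1)
  have hτo' : (fun m : ℕ => τ m) =o[atTop] (fun m : ℕ => Real.sqrt (2*(m:ℝ)+1)) := by
    refine hτo.trans_isBigO (Asymptotics.isBigO_of_le _ fun m => ?_)
    rw [Real.norm_eq_abs, Real.norm_eq_abs, abs_of_nonneg (Real.sqrt_nonneg _),
      abs_of_nonneg (Real.sqrt_nonneg _)]
    exact Real.sqrt_le_sqrt (by have : (0:ℝ) ≤ m := Nat.cast_nonneg m; linarith)
  have hE1 : ∀ᶠ m : ℕ in atTop, 2 ≤ τ m := hτ.eventually_ge_atTop 2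
  have hE3 : ∀ᶠ m : ℕ in atTop, |τ m| ≤ 1/(8*fε0*C) * Real.sqrt (2*(m:ℝ)+1) := by
    have := hτo'.def (show (0:ℝ) < 1/(8*fε0*C) by positivity)
    filter_upwards [this] with m hm
    simpa [Real.norm_eq_abs, abs_of_nonneg (Real.sqrt_nonneg _)] using hm
  have hE5 : ∀ᶠ m : ℕ in atTop, τ m ^2 ≤ δ^2 * m := by
    have := hτo.def hδ
    filter_upwards [this] with m hm
    rw [Real.norm_eq_abs, Real.norm_eq_abs, abs_of_nonneg (Real.sqrt_nonneg _)] at hm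
    have h1 : |τ m|^2 ≤ (δ * Real.sqrt m)^2 := by
      have := abs_nonneg (τ m)
      nlinarith [Real.sqrt_nonneg (m:ℝ)]
    have h2 : (Real.sqrt (m:ℝ))^2 = (m:ℝ) := Real.sq_sqrt (Nat.cast_nonneg m)
    calc τ m ^2 = |τ m|^2 := (sq_abs _).symm
      _ ≤ δ^2 * (Real.sqrt m)^2 := by nlinarith
      _ = δ^2 * m := by rw [h2]
  -- the main eventual bound
  have hub : ∀ᶠ m : ℕ in atTop, u m ≤ v m := by
    filter_upwards [hE1, hsqrt_ev δ⁻¹, hE3, hsqrt_ev (4*fε0*C), hE5]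
      with m h1 h2 h3 h4 h5
    set s := Real.sqrt (2*(m:ℝ)+1) with hsdef
    have hs0 : 0 < s := Real.sqrt_pos.2 (by positivity)
    have hss : s^2 = 2*(m:ℝ)+1 := Real.sq_sqrt (by positivity)
    have hδs : 1 ≤ δ * s := by
      have := mul_le_mul_of_nonneg_left h2 hδ.le
      rwa [mul_inv_cancel₀ (ne_of_gt hδ)] at this
    have hsqrt4 : Real.sqrt (4*(2*(m:ℝ)+1)) = 2*s := by
      rw [show (4:ℝ)*(2*(m:ℝ)+1) = (2*s)^2 by nlinarith, Real.sqrt_sq (by positivity)]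
    have ha : 8*fε0*C*τ m ≤ s := by
      have h3' : τ m ≤ 1/(8*fε0*C) * s := le_trans (le_abs_self _) h3
      have := mul_le_mul_of_nonneg_left h3' (show (0:ℝ) ≤ 8*fε0*C by positivity)
      calc 8*fε0*C*τ m ≤ 8*fε0*C*(1/(8*fε0*C) * s) := this
        _ = s := by field_simp
    have hCond3 : 2*fε0*C*(1+τ m^2) ≤ τ m/2*s := by
      have key1 : 2*fε0*C*τ m^2 ≤ τ m/4*s := by nlinarith
      have key2 : 2*fε0*C ≤ τ m/4*s := by nlinarith
      nlinarith
    -- measure bound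
    set s1 : Set ℝ := {x : ℝ | τ m/2 < |x|} with hs1def
    set s2 : Set ℝ := {x : ℝ | δ*s < |x|} with hs2def
    have hs1m : MeasurableSet s1 := measurableSet_lt measurable_const measurable_abs
    have hs2m : MeasurableSet s2 := measurableSet_lt measurable_const measurable_abs
    set N : Set Ω := {ω | ¬(|Z m ω| ≤ δ * Real.sqrt (2 * (m : ℝ) + 1) →
        |M m ω - Z m ω / (Real.sqrt (4 * (2 * (m : ℝ) + 1)) * fε0)|
          ≤ C * (1 + Z m ω ^ 2) / (2 * (m : ℝ) + 1))} with hNdef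
    have hN : P N = 0 := by
      have h := hcouple m
      rwa [ae_iff] at h
    have hsubA : {ω | τ m < 2 * Real.sqrt (2 * (m : ℝ) + 1) * fε0 * |M m ω|}
        ⊆ (Z m ⁻¹' s1) ∪ ((Z m ⁻¹' s2) ∪ N) := by
      intro ω hω
      rw [Set.mem_setOf_eq] at hω
      by_cases hcp : |Z m ω| ≤ δ * Real.sqrt (2 * (m : ℝ) + 1) →
          |M m ω - Z m ω / (Real.sqrt (4 * (2 * (m : ℝ) + 1)) * fε0)|
            ≤ C * (1 + Z m ω ^ 2) / (2 * (m : ℝ) + 1)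
      · by_cases hz : |Z m ω| ≤ δ * s
        · left
          show τ m/2 < |Z m ω|
          have hcM := hcp (by rwa [← hsdef])
          rw [hsqrt4] at hcM
          by_cases hzt : |Z m ω| ≤ τ m
          · set a := 2*s*fε0 with hadef
            have hapos : 0 < a := by positivity
            have hMb : |M m ω| ≤ |Z m ω|/a + C*(1+Z m ω^2)/(2*(m:ℝ)+1) := by
              calc |M m ω| = |Z m ω/a + (M m ω - Z m ω/a)| := by ring_nf
                _ ≤ |Z m ω/a| + |M m ω - Z m ω/a| := abs_add_le _ _
                _ ≤ |Z m ω|/a + C*(1+Z m ω^2)/(2*(m:ℝ)+1) := by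
                    rw [abs_div, abs_of_pos hapos]
                    exact add_le_add_right hcM _
            have hmul : a * |M m ω| ≤ |Z m ω| + a * (C*(1+Z m ω^2)/(2*(m:ℝ)+1)) := by
              have := mul_le_mul_of_nonneg_left hMb hapos.le
              have hcan : a * (|Z m ω|/a) = |Z m ω| := by field_simp [hapos.ne']
              calc a * |M m ω| ≤ a * (|Z m ω|/a + C*(1+Z m ω^2)/(2*(m:ℝ)+1)) := this
                _ = |Z m ω| + a * (C*(1+Z m ω^2)/(2*(m:ℝ)+1)) := by
                    rw [mul_add, hcan]
            have hR : a * (C*(1+Z m ω^2)/(2*(m:ℝ)+1)) ≤ τ m/2 := by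
              have hZsq : Z m ω^2 ≤ τ m^2 := by
                nlinarith [abs_nonneg (Z m ω), sq_abs (Z m ω)]
              have heq : a * (C*(1+Z m ω^2)/(2*(m:ℝ)+1)) = 2*fε0*(C*(1+Z m ω^2))/s := by
                rw [← hss, hadef]
                field_simp [hs0.ne']
              rw [heq, div_le_iff₀ hs0]
              calc 2*fε0*(C*(1+Z m ω^2)) ≤ 2*fε0*C*(1+τ m^2) := by
                    nlinarith [mul_le_mul_of_nonneg_left hZsq (show (0:ℝ) ≤ 2*fε0*C by positivity)]
                _ ≤ τ m/2*s := hCond3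
            have hωa : τ m < a * |M m ω| := by
              rw [hadef]
              calc τ m < 2 * s * fε0 * |M m ω| := by rw [hsdef]; exact hω
                _ = 2*s*fε0 * |M m ω| := rfl
            linarith
          · push_neg at hzt
            linarith
        · right; left
          push_neg at hz
          exact hz
      · right; right
        exact hcp
    have hmeasineq : P {ω | τ m < 2 * Real.sqrt (2 * (m : ℝ) + 1) * fε0 * |M m ω|}
        ≤ P (Z m ⁻¹' s1) + P (Z m ⁻¹' s2) := by
      calc P {ω | τ m < 2 * Real.sqrt (2 * (m : ℝ) + 1) * fε0 * |M m ω|}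
          ≤ P ((Z m ⁻¹' s1) ∪ ((Z m ⁻¹' s2) ∪ N)) := measure_mono hsubA
        _ ≤ P (Z m ⁻¹' s1) + P ((Z m ⁻¹' s2) ∪ N) := measure_union_le _ _
        _ ≤ P (Z m ⁻¹' s1) + (P (Z m ⁻¹' s2) + P N) :=
            add_le_add_right (measure_union_le _ _) _
        _ = P (Z m ⁻¹' s1) + P (Z m ⁻¹' s2) := by rw [hN, add_zero]
    have hPA : (P {ω | τ m < 2 * Real.sqrt (2 * (m : ℝ) + 1) * fε0 * |M m ω|}).toReal
        ≤ (P (Z m ⁻¹' s1)).toReal + (P (Z m ⁻¹' s2)).toReal := by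
      have hfin : P (Z m ⁻¹' s1) + P (Z m ⁻¹' s2) ≠ ⊤ :=
        ENNReal.add_ne_top.2 ⟨measure_ne_top _ _, measure_ne_top _ _⟩
      have h := ENNReal.toReal_mono hfin hmeasineq
      rwa [ENNReal.toReal_add (measure_ne_top _ _) (measure_ne_top _ _)] at h
    -- tail bounds
    have hB : (P (Z m ⁻¹' s1)).toReal ≤ 2 * Real.exp (-(τ m/2)^2/2) := by
      have hmap : P (Z m ⁻¹' s1) = gaussianReal 0 1 s1 := by
        rw [← hZ m, Measure.map_apply (hZmeas m) hs1m]
      rw [hmap]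
      exact gauss_abs_tail (by linarith)
    have hC2 : (P (Z m ⁻¹' s2)).toReal ≤ 2 * Real.exp (-(δ*s)^2/2) := by
      have hmap : P (Z m ⁻¹' s2) = gaussianReal 0 1 s2 := by
        rw [← hZ m, Measure.map_apply (hZmeas m) hs2m]
      rw [hmap]
      exact gauss_abs_tail hδs
    -- combine
    have hexp1 : Real.exp (-(τ m/2)^2/2) * Real.exp (τ m^2/8) = 1 := by
      rw [← Real.exp_add, show -(τ m/2)^2/2 + τ m^2/8 = 0 by ring, Real.exp_zero]
    have hexp2 : Real.exp (-(δ*s)^2/2) * Real.exp (τ m^2/8)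
        ≤ Real.exp (-(δ^2/2) * m) := by
      rw [← Real.exp_add]
      apply Real.exp_le_exp.2
      have : (δ*s)^2 = δ^2 * (2*(m:ℝ)+1) := by rw [mul_pow, hss]
      rw [this]
      nlinarith [sq_nonneg δ]
    have hunn : (0:ℝ) ≤ (P {ω | τ m < 2 * Real.sqrt (2 * (m : ℝ) + 1) * fε0 * |M m ω|}).toReal :=
      ENNReal.toReal_nonneg
    calc u m = (P {ω | τ m < 2 * Real.sqrt (2 * (m : ℝ) + 1) * fε0 * |M m ω|}).toReal
          * Real.exp (τ m ^ 2 / 8) := rfl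
      _ ≤ ((P (Z m ⁻¹' s1)).toReal + (P (Z m ⁻¹' s2)).toReal) * Real.exp (τ m ^ 2 / 8) :=
          mul_le_mul_of_nonneg_right hPA (Real.exp_nonneg _)
      _ ≤ (2 * Real.exp (-(τ m/2)^2/2) + 2 * Real.exp (-(δ*s)^2/2)) * Real.exp (τ m ^ 2 / 8) := by
          apply mul_le_mul_of_nonneg_right _ (Real.exp_nonneg _)
          exact add_le_add hB hC2
      _ = 2 * (Real.exp (-(τ m/2)^2/2) * Real.exp (τ m^2/8))
          + 2 * (Real.exp (-(δ*s)^2/2) * Real.exp (τ m^2/8)) := by ring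
      _ ≤ 2 * 1 + 2 * Real.exp (-(δ^2/2) * m) := by
          rw [hexp1]
          have := mul_le_mul_of_nonneg_left hexp2 (show (0:ℝ) ≤ 2 by norm_num)
          linarith
      _ = v m := by rw [hv]; ring
  -- conclude via limsup
  have hubd : IsBoundedUnder (· ≤ ·) atTop v := hvlim.isBoundedUnder_le
  have hcb : IsCoboundedUnder (· ≤ ·) atTop u :=
    isCoboundedUnder_le_of_le atTop (x := 0) fun m => by positivity
  calc limsup u atTop ≤ limsup v atTop := limsup_le_limsup hub hcb hubd
    _ = 2 := hvlim.limsup_eq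
end
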